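/- Fix m, l, g > 0 and ρ ∈ ℝ with ρ ≠ 0 and ρ ≠ m. Let Ω₁, Ω₂ : ℝ → ℝ and v, Γ : ℝ → ℝ³ solve the spherical-pendulum closed-loop system. Then the pair (Ω₁, Ω₂, Γ) satisfies the decoupled modified-gravity pendulum equations: Ω₁'(t) = (ρ g / ((ρ − m) l)) Γ₂(t) and Ω₂'(t) = −(ρ g / ((ρ − m) l)) Γ₁(t) for all t; in particular these equations do not involve v. -/

import Mathlib

open Matrix

/-! In coordinates, `μ₁' = -m l Ω₁ v₃ + m g l Γ₂` and `p₂' = ρ v₃ Ω₁`, with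
`μ₁' = m l² Ω₁' - m l v₂'` and `p₂' = ρ v₂' - m l Ω₁'`. In the combination `ρ μ₁' + m l p₂'`
both `v₂'` and the `v₃`-terms cancel, leaving `m l² (ρ - m) Ω₁' = ρ m g l Γ₂`; likewise
`ρ μ₂' - m l p₁'` yields the equation for `Ω₂'`. -/

/-- The spherical-pendulum closed-loop system: with `Ω = (Ω₁, Ω₂, 0)`,
`μ = (m l² Ω₁ − m l v₂, m l² Ω₂ + m l v₁, 0)` and
`p = (ρ v₁ + m l Ω₂, ρ v₂ − m l Ω₁, ρ v₃)`, the first two components of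
`μ' = μ × Ω + p × v − m g l (e₃ × Γ)` hold, together with `p' = p × Ω` and
`Γ' = Γ × Ω`. -/
def SphPendCL (m l g ρ : ℝ) (Ω₁ Ω₂ : ℝ → ℝ) (v Γ : ℝ → Fin 3 → ℝ) : Prop :=
  let Ω : ℝ → Fin 3 → ℝ := fun t => ![Ω₁ t, Ω₂ t, 0]
  let μ : ℝ → Fin 3 → ℝ := fun t =>
    ![m * l ^ 2 * Ω₁ t - m * l * v t 1, m * l ^ 2 * Ω₂ t + m * l * v t 0, 0]
  let p : ℝ → Fin 3 → ℝ := fun t =>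
    ![ρ * v t 0 + m * l * Ω₂ t, ρ * v t 1 - m * l * Ω₁ t, ρ * v t 2]
  Differentiable ℝ Ω₁ ∧ Differentiable ℝ Ω₂ ∧ Differentiable ℝ v ∧ Differentiable ℝ Γ ∧
  (∀ t, deriv μ t 0
      = (μ t ⨯₃ Ω t + p t ⨯₃ v t - (m * g * l) • (![(0 : ℝ), 0, 1] ⨯₃ Γ t)) 0) ∧
  (∀ t, deriv μ t 1
      = (μ t ⨯₃ Ω t + p t ⨯₃ v t - (m * g * l) • (![(0 : ℝ), 0, 1] ⨯₃ Γ t)) 1) ∧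
  (∀ t, deriv p t = p t ⨯₃ Ω t) ∧
  (∀ t, deriv Γ t = Γ t ⨯₃ Ω t)

section

variable {𝕜 F : Type*} [NontriviallyNormedField 𝕜] [NormedAddCommGroup F] [NormedSpace 𝕜 F]
  {a b c : 𝕜 → F} {a' b' c' : F} {x : 𝕜}

theorem HasDerivAt.vecCons₃ (ha : HasDerivAt a a' x) (hb : HasDerivAt b b' x)
    (hc : HasDerivAt c c' x) :
    HasDerivAt (fun y => ![a y, b y, c y]) ![a', b', c'] x :=
  ha.finCons (hb.finCons (hc.finCons ((hasDerivAt_const x ![]).congr_deriv (Subsingleton.elim _ _))))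

end

theorem eq_of_momentum_eqs {m l g ρ a b w c γ : ℝ} (hm : m ≠ 0) (hl : l ≠ 0)
    (hρm : ρ ≠ m) (hμ : m * l ^ 2 * a - m * l * b = -(m * l * w * c) + m * g * l * γ)
    (hp : ρ * b - m * l * a = ρ * c * w) :
    a = ρ * g / ((ρ - m) * l) * γ := by
  have hρm' : ρ - m ≠ 0 := sub_ne_zero.mpr hρm
  have key : m * l * ((ρ - m) * l * a) = m * l * (ρ * g * γ) := by
    linear_combination ρ * hμ + m * l * hp
  have := mul_left_cancel₀ (mul_ne_zero hm hl) key
  field_simp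
  linear_combination this

namespace SphPendCL

variable {m l g ρ : ℝ} {Ω₁ Ω₂ : ℝ → ℝ} {v Γ : ℝ → Fin 3 → ℝ}

theorem deriv_mu_coords (hsol : SphPendCL m l g ρ Ω₁ Ω₂ v Γ) (t : ℝ) :
    m * l ^ 2 * deriv Ω₁ t - m * l * deriv v t 1 = -(m * l * Ω₁ t * v t 2) + m * g * l * Γ t 1 ∧
    m * l ^ 2 * deriv Ω₂ t + m * l * deriv v t 0 = -(m * l * Ω₂ t * v t 2) - m * g * l * Γ t 0 := by
  obtain ⟨hΩ₁, hΩ₂, hv, -, hμ₀, hμ₁, -, -⟩ := hsol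
  have hv' := hasDerivAt_pi.1 (hv t).hasDerivAt
  have hμ : HasDerivAt
      (fun s => ![m * l ^ 2 * Ω₁ s - m * l * v s 1, m * l ^ 2 * Ω₂ s + m * l * v s 0, 0]) _ t :=
    HasDerivAt.vecCons₃
      (((hΩ₁ t).hasDerivAt.const_mul (m * l ^ 2)).sub ((hv' 1).const_mul (m * l)))
      (((hΩ₂ t).hasDerivAt.const_mul (m * l ^ 2)).add ((hv' 0).const_mul (m * l)))
      (hasDerivAt_const t (0 : ℝ))
  have h₀ := hμ₀ t
  have h₁ := hμ₁ t
  rw [hμ.deriv] at h₀ h₁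
  simp only [cross_apply, Pi.add_apply, Pi.sub_apply, Pi.smul_apply, smul_eq_mul, cons_val_zero,
    cons_val_one, cons_val_two, head_cons, tail_cons] at h₀ h₁
  constructor
  · linear_combination h₀
  · linear_combination h₁

theorem deriv_p_coords (hsol : SphPendCL m l g ρ Ω₁ Ω₂ v Γ) (t : ℝ) :
    ρ * deriv v t 0 + m * l * deriv Ω₂ t = -(ρ * v t 2 * Ω₂ t) ∧
    ρ * deriv v t 1 - m * l * deriv Ω₁ t = ρ * v t 2 * Ω₁ t := by
  obtain ⟨hΩ₁, hΩ₂, hv, -, -, -, hp, -⟩ := hsol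
  have hv' := hasDerivAt_pi.1 (hv t).hasDerivAt
  have hp' : HasDerivAt
      (fun s => ![ρ * v s 0 + m * l * Ω₂ s, ρ * v s 1 - m * l * Ω₁ s, ρ * v s 2]) _ t :=
    HasDerivAt.vecCons₃
      (((hv' 0).const_mul ρ).add ((hΩ₂ t).hasDerivAt.const_mul (m * l)))
      (((hv' 1).const_mul ρ).sub ((hΩ₁ t).hasDerivAt.const_mul (m * l)))
      ((hv' 2).const_mul ρ)
  have h := hp t
  rw [hp'.deriv] at h
  have h₀ := congrFun h 0
  have h₁ := congrFun h 1
  simp only [cross_apply, cons_val_zero, cons_val_one, cons_val_two, head_cons, tail_cons] at h₀ h₁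
  constructor
  · linear_combination h₀
  · linear_combination h₁

end SphPendCL

theorem sphPend_decoupled_general (m l g ρ : ℝ) (hm : 0 < m) (hl : 0 < l)
    (hρm : ρ ≠ m)
    (Ω₁ Ω₂ : ℝ → ℝ) (v Γ : ℝ → Fin 3 → ℝ) (hsol : SphPendCL m l g ρ Ω₁ Ω₂ v Γ) :
    ∀ t, deriv Ω₁ t = ρ * g / ((ρ - m) * l) * Γ t 1 ∧
         deriv Ω₂ t = -(ρ * g / ((ρ - m) * l)) * Γ t 0 := by
  intro t
  obtain ⟨hμ₁, hμ₂⟩ := hsol.deriv_mu_coords t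
  obtain ⟨hp₁, hp₂⟩ := hsol.deriv_p_coords t
  refine ⟨eq_of_momentum_eqs hm.ne' hl.ne' hρm hμ₁ hp₂, ?_⟩
  rw [neg_mul, ← mul_neg]
  exact eq_of_momentum_eqs (b := -deriv v t 0) (w := Ω₂ t) (c := v t 2) hm.ne' hl.ne' hρm
    (by linear_combination hμ₂) (by linear_combination -hp₁)

/-- Along solutions of the spherical-pendulum closed-loop system, `(Ω₁, Ω₂, Γ)` satisfy
the decoupled modified-gravity pendulum equations
`Ω₁' = (ρg/((ρ−m)l)) Γ₂`, `Ω₂' = −(ρg/((ρ−m)l)) Γ₁`, which do not involve `v`. -/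
theorem sphPend_decoupled (m l g ρ : ℝ) (hm : 0 < m) (hl : 0 < l) (hg : 0 < g)
    (hρ : ρ ≠ 0) (hρm : ρ ≠ m)
    (Ω₁ Ω₂ : ℝ → ℝ) (v Γ : ℝ → Fin 3 → ℝ) (hsol : SphPendCL m l g ρ Ω₁ Ω₂ v Γ) :
    ∀ t, deriv Ω₁ t = ρ * g / ((ρ - m) * l) * Γ t 1 ∧
         deriv Ω₂ t = -(ρ * g / ((ρ - m) * l)) * Γ t 0 :=
  sphPend_decoupled_general m l g ρ hm hl hρm Ω₁ Ω₂ v Γ hsol
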